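/- Let f_n(x) = 2T_n(x/2 − 1) + 2 (Chebyshev type chain with a = 1/2, b = −1). Then for positive integers m < n, f_m(x) divides f_n(x) in ℚ[x] if and only if m ∣ n and n/m is odd. -/

import Mathlib

/-!
Writing `u = x/2 - 1`, we have `f_j = 2 (T_j ∘ u + 1)` and `T_{km} = T_k ∘ T_m`; for odd `k`,
`-1` is a root of `T_k + 1`, so `T_m ∘ u + 1` divides `T_k ∘ T_m ∘ u + 1`. Conversely, at
`x = 2 cos (π/m) + 2` we have `u(x) = cos (π/m)`, hence `f_j(x) = 2 cos (jπ/m) + 2`. This vanishes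
for `j = m`, so also for `j = n`, which forces `n/m` to be an odd integer.
-/

open Polynomial Real

namespace Polynomial.Chebyshev

variable {R : Type*} [CommRing R]

theorem X_add_one_dvd_T_add_one {n : ℤ} (hn : Odd n) : X + 1 ∣ T R n + 1 := by
  have hroot : (T R n + 1).IsRoot (-1) := by simp [Int.negOnePow_odd n hn]
  simpa using dvd_iff_isRoot.mpr hroot

theorem add_one_dvd_T_comp_add_one {n : ℤ} (hn : Odd n) (p : R[X]) :
    p + 1 ∣ (T R n).comp p + 1 := by
  obtain ⟨q, hq⟩ := X_add_one_dvd_T_add_one (R := R) hn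
  exact ⟨q.comp p, by simpa using congrArg (·.comp p) hq⟩

end Polynomial.Chebyshev

open Polynomial.Chebyshev (T)

noncomputable def chebyshevChain (j : ℤ) : ℚ[X] :=
  C 2 * (T ℚ j).comp (C (1 / 2) * X - C 1) + C 2

theorem chebyshevChain_eq_C_two_mul (j : ℤ) :
    chebyshevChain j = C 2 * ((T ℚ j).comp (C (1 / 2) * X - C 1) + 1) := by
  rw [chebyshevChain, mul_add, mul_one]

theorem chebyshevChain_dvd_chebyshevChain_mul {k : ℤ} (hk : Odd k) (m : ℤ) :
    chebyshevChain m ∣ chebyshevChain (k * m) := by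
  rw [chebyshevChain_eq_C_two_mul, chebyshevChain_eq_C_two_mul, Chebyshev.T_mul, comp_assoc]
  exact mul_dvd_mul_left _ (Chebyshev.add_one_dvd_T_comp_add_one hk _)

theorem aeval_chebyshevChain (θ : ℝ) (j : ℤ) :
    aeval (2 * cos θ + 2) (chebyshevChain j) = 2 * cos (j * θ) + 2 := by
  have hu : aeval (2 * cos θ + 2) (C (1 / 2 : ℚ) * X - C 1) = cos θ := by
    simp only [one_div, map_one, aeval_sub, map_mul, aeval_C, map_inv₀, eq_ratCast,
      Rat.cast_ofNat, aeval_X]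
    ring
  simp only [chebyshevChain, map_add, map_mul, aeval_comp, hu, Chebyshev.aeval_T,
    Chebyshev.T_real_cos, aeval_C]
  norm_num

theorem cos_eq_neg_one_of_chebyshevChain_dvd {m n : ℤ} (hm : m ≠ 0)
    (h : chebyshevChain m ∣ chebyshevChain n) : cos (n * (π / m)) = -1 := by
  have hroot : aeval (2 * cos (π / m) + 2) (chebyshevChain m) = 0 := by
    rw [aeval_chebyshevChain, mul_div_cancel₀ _ (by exact_mod_cast hm), cos_pi]
    ring
  obtain ⟨q, hq⟩ := h
  have := aeval_chebyshevChain (π / m) n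
  rw [hq, map_mul, hroot, zero_mul] at this
  linarith

theorem dvd_and_odd_div_of_cos_mul_pi_div_eq_neg_one {m n : ℕ} (hm : 0 < m)
    (h : cos (n * (π / m)) = -1) : m ∣ n ∧ Odd (n / m) := by
  obtain ⟨k, hk⟩ := cos_eq_neg_one_iff.mp h
  have hnk : (n : ℤ) = m * (2 * k + 1) := by
    have : (n : ℝ) = m * (2 * k + 1) := by
      field_simp at hk
      linear_combination -hk
    exact_mod_cast this
  refine ⟨Int.natCast_dvd_natCast.mp ⟨_, hnk⟩, (Int.odd_coe_nat _).mp ?_⟩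
  rw [Int.natCast_div, hnk, Int.mul_ediv_cancel_left _ (by positivity)]
  exact odd_two_mul_add_one k

theorem chebyshev_chain_neg_one_dvd_iff_general (f : ℕ → ℚ[X])
    (hf : ∀ j : ℕ, f j =
      C 2 * (Polynomial.Chebyshev.T ℚ (j : ℤ)).comp (C (1/2) * X - C 1) + C 2)
    (m n : ℕ) (hm : 0 < m) :
    f m ∣ f n ↔ m ∣ n ∧ Odd (n / m) := by
  have hf' : ∀ j : ℕ, f j = chebyshevChain j := hf
  rw [hf', hf']
  constructor
  · intro h
    exact dvd_and_odd_div_of_cos_mul_pi_div_eq_neg_one hm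
      (by exact_mod_cast cos_eq_neg_one_of_chebyshevChain_dvd (by positivity) h)
  · rintro ⟨⟨k, rfl⟩, hk⟩
    rw [Nat.mul_div_cancel_left k hm] at hk
    have := chebyshevChain_dvd_chebyshevChain_mul ((Int.odd_coe_nat k).mpr hk) m
    rwa [mul_comm, ← Nat.cast_mul] at this

theorem chebyshev_chain_neg_one_dvd_iff (f : ℕ → ℚ[X])
    (hf : ∀ j : ℕ, f j =
      C 2 * (Polynomial.Chebyshev.T ℚ (j : ℤ)).comp (C (1/2) * X - C 1) + C 2)
    (m n : ℕ) (hm : 0 < m) (hmn : m < n) :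
    f m ∣ f n ↔ m ∣ n ∧ Odd (n / m) :=
  chebyshev_chain_neg_one_dvd_iff_general f hf m n hm
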